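/- The convergence order x ⊑ y holds if and only if for every b, x ⇓ b implies y ⇓ b. -/

import Mathlib

inductive Converges {A : Type*} : Computation A → A → Prop
  | ret (a : A) : Converges (Computation.pure a) a
  | step {x : Computation A} {a : A} : Converges x a → Converges x.think a

def Diverge {A : Type*} (x : Computation A) : Prop :=
  ∃ P : Computation A → Prop, P x ∧ ∀ y, P y → ∃ y', y = Computation.think y' ∧ P y'

def WBisim {A : Type*} (x y : Computation A) : Prop :=
  ∃ R : Computation A → Computation A → Prop, R x y ∧ ∀ u v, R u v →
    (∃ a, Converges u a ∧ Converges v a) ∨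
    (∃ u' v', u = Computation.think u' ∧ v = Computation.think v' ∧ R u' v')

def ConvOrder {A : Type*} (x y : Computation A) : Prop :=
  ∃ R : Computation A → Computation A → Prop, R x y ∧ ∀ u v, R u v →
    (∃ a, Converges u a ∧ Converges v a) ∨
    (∃ u' v', u = Computation.think u' ∧ v = Computation.think v' ∧ R u' v') ∨
    (∃ u', u = Computation.think u' ∧ R u' v)

def stepInf (A : Type*) : Computation A := Computation.empty A

inductive DFinite {A : Type*} : Computation A → Prop
  | ret (a : A) : DFinite (Computation.pure a)
  | step {x : Computation A} : DFinite x → DFinite x.think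

def Finitary {A B : Type*} (F : (A → Computation B) → (A → Computation B)) : Prop :=
  ∀ f a b, Converges (F f a) b →
    ∃ l : List (A × B), (∀ p ∈ l, Converges (f p.1) p.2) ∧
      ∀ g : A → Computation B, (∀ p ∈ l, Converges (g p.1) p.2) → Converges (F g a) b

theorem conv_mem {A : Type*} {x : Computation A} {a : A} (h : Converges x a) : a ∈ x := by
  induction h with
  | ret a => exact Computation.ret_mem a
  | step _ ih => exact Computation.think_mem ih

theorem conv_thinkN {A : Type*} (a : A) : ∀ n, Converges ((Computation.pure a).thinkN n) a
  | 0 => Converges.ret a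
  | n + 1 => Converges.step (conv_thinkN a n)

theorem mem_conv {A : Type*} {x : Computation A} {a : A} (h : a ∈ x) : Converges x a := by
  obtain ⟨n, hr⟩ := Computation.exists_results_of_mem h
  rw [Computation.eq_thinkN hr]
  exact conv_thinkN a n

theorem conv_unique {A : Type*} {x : Computation A} {a b : A}
    (h1 : Converges x a) (h2 : Converges x b) : a = b :=
  Computation.mem_unique (conv_mem h1) (conv_mem h2)

theorem think_inj {A : Type*} {u v : Computation A}
    (h : Computation.think u = Computation.think v) : u = v := by
  have := congrArg Computation.destruct h
  rwa [Computation.destruct_think, Computation.destruct_think, Sum.inr.injEq] at this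

theorem pure_ne_think {A : Type*} {a : A} {u : Computation A} :
    Computation.pure a ≠ Computation.think u := by
  intro h
  have := congrArg Computation.destruct h
  rw [Computation.destruct_pure, Computation.destruct_think] at this
  cases this

theorem stmt15 {A : Type*} (x y : Computation A) :
    ConvOrder x y ↔ ∀ b : A, Converges x b → Converges y b := by
  constructor
  · rintro ⟨R, hxy, hR⟩ b hb
    induction hb generalizing y with
    | ret a =>
      rcases hR _ _ hxy with ⟨c, hc1, hc2⟩ | ⟨u', v', hu', _, _⟩ | ⟨u', hu', _⟩
      · rwa [conv_unique hc1 (Converges.ret a)] at hc2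
      · exact absurd hu' pure_ne_think
      · exact absurd hu' pure_ne_think
    | @step u' a hu' ih =>
      rcases hR _ _ hxy with ⟨c, hc1, hc2⟩ | ⟨u'', v', hu'', hv, hR'⟩ | ⟨u'', hu'', hR'⟩
      · rwa [conv_unique hc1 (Converges.step hu')] at hc2
      · rw [hv]
        exact Converges.step (ih _ (by rw [think_inj hu'']; exact hR'))
      · exact ih _ (by rw [think_inj hu'']; exact hR')
  · intro H
    refine ⟨fun u v => ∀ b, Converges u b → Converges v b, H, fun u v huv => ?_⟩
    match h : Computation.destruct u with
    | Sum.inl a =>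
      have hu := Computation.destruct_eq_pure h
      exact Or.inl ⟨a, hu ▸ Converges.ret a, huv a (hu ▸ Converges.ret a)⟩
    | Sum.inr u' =>
      have hu := Computation.destruct_eq_think h
      exact Or.inr (Or.inr ⟨u', hu, fun b hb => huv b (hu ▸ Converges.step hb)⟩)
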